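/- If each of N independent mechanisms A_i is a Gaussian mechanism A_i(D_i) = f_i(D_i) + ξ_i with ξ_i ∼ N(0, σ_i² I_d) and the f_i have ℓ₂-sensitivity at most C (only one client's data differs between neighboring global datasets), then the aggregate Σ_i A_i(D_i) is (ε, δ)-DP whenever the single Gaussian mechanism with sensitivity C and noise variance Σ_i σ_i² is (ε, δ)-DP. In particular the aggregate achieves strictly better privacy than any individual client's local mechanism when N ≥ 2 and all σ_i > 0. -/

import Mathlib

/-!
Independent Gaussian noises add up: the law of `∑ᵢ (fᵢ(Dᵢ) + ξᵢ)` is the isotropic Gaussian of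
variance `∑ᵢ σᵢ²` centred at `∑ᵢ fᵢ(Dᵢ)` (compare characteristic functions), and on neighbouring
datasets the two centres differ by `f_k(D_k) − f_k(D'_k)`, of norm at most `C`. So the aggregate is
one Gaussian mechanism with sensitivity `C` and variance `∑ᵢ σᵢ²`.

For the strict improvement, the hockey-stick divergence of `N(0, σ²)` from `N(C, σ²)` is the
Neyman–Pearson expression `Φ(r/2 − log α / r) − α Φ(−r/2 − log α / r)` in `r = C/σ`, whose
derivative in `r` is the standard normal density `φ(r/2 − log α / r) > 0`. Hence it strictly
decreases as the variance grows, and `∑ᵢ σᵢ² > σ_k²` as soon as there is a second client.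
-/

open MeasureTheory ProbabilityTheory

/-- Hockey-stick divergence `H_α(P‖Q) = E_{t∼Q}[max(dP/dQ(t) − α, 0)]`. -/
noncomputable def hsDiv {O : Type*} [MeasurableSpace O] (α : ℝ) (P Q : Measure O) : ℝ :=
  ∫ t, max ((P.rnDeriv Q t).toReal - α) 0 ∂Q

/-- Isotropic Gaussian `N(0, v·I_d)` on `ℝ^d` (as a Euclidean space). -/
noncomputable def isoGauss (d : ℕ) (v : NNReal) : Measure (EuclideanSpace ℝ (Fin d)) :=
  (Measure.pi (fun _ : Fin d => gaussianReal 0 v) : Measure (Fin d → ℝ)).map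
    (EuclideanSpace.equiv (Fin d) ℝ).symm

section GaussianMechanism

open scoped NNReal
open Set Real

instance isProbabilityMeasure_isoGauss (d : ℕ) (v : ℝ≥0) : IsProbabilityMeasure (isoGauss d v) :=
  Measure.isProbabilityMeasure_map (by fun_prop)

lemma charFun_isoGauss (d : ℕ) (v : ℝ≥0) (t : EuclideanSpace ℝ (Fin d)) :
    charFun (isoGauss d v) t = Complex.exp (-(v * ‖t‖ ^ 2 / 2)) := by
  rw [isoGauss, show ⇑(EuclideanSpace.equiv (Fin d) ℝ).symm = WithLp.toLp 2 from rfl, charFun_pi]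
  simp_rw [charFun_gaussianReal]
  rw [← Complex.exp_sum, ← Complex.ofReal_pow, EuclideanSpace.real_norm_sq_eq]
  push_cast
  simp [Finset.mul_sum, Finset.sum_div]

lemma isoGauss_map_sum_pi {ι : Type*} [Fintype ι] (d : ℕ) (v : ι → ℝ≥0) :
    (Measure.pi fun i => isoGauss d (v i)).map (fun x => ∑ i, x i) = isoGauss d (∑ i, v i) := by
  refine Measure.ext_of_charFun (funext fun t => ?_)
  rw [charFun_map_sum_pi_eq_prod, Finset.prod_apply]
  simp_rw [charFun_isoGauss, ← Complex.exp_sum]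
  push_cast
  simp [Finset.sum_mul, Finset.sum_div]

lemma isoGauss_map_sum_add_pi {ι : Type*} [Fintype ι] (d : ℕ) (v : ι → ℝ≥0)
    (a : ι → EuclideanSpace ℝ (Fin d)) :
    (Measure.pi fun i => isoGauss d (v i)).map (fun x => ∑ i, (a i + x i))
      = (isoGauss d (∑ i, v i)).map ((∑ i, a i) + ·) := by
  rw [← isoGauss_map_sum_pi, Measure.map_map (by fun_prop) (by fun_prop)]
  simp_rw [Function.comp_def, Finset.sum_add_distrib]

lemma real_withDensity_ofReal {O : Type*} [MeasurableSpace O] {Q : Measure O} {L : O → ℝ}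
    (hLi : Integrable L Q) (hL0 : 0 ≤ L) {S : Set O} (hS : MeasurableSet S) :
    (Q.withDensity fun t => ENNReal.ofReal (L t)).real S = ∫ t in S, L t ∂Q := by
  rw [measureReal_def, withDensity_apply _ hS,
    integral_eq_lintegral_of_nonneg_ae (.of_forall hL0) hLi.restrict.aestronglyMeasurable]

lemma hsDiv_withDensity {O : Type*} [MeasurableSpace O] {Q : Measure O} [IsFiniteMeasure Q]
    {L : O → ℝ} (hL : Measurable L) (hL0 : 0 ≤ L)
    [IsFiniteMeasure (Q.withDensity fun t => ENNReal.ofReal (L t))] (α : ℝ) :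
    hsDiv α (Q.withDensity fun t => ENNReal.ofReal (L t)) Q
      = (Q.withDensity fun t => ENNReal.ofReal (L t)).real {t | α ≤ L t}
        - α * Q.real {t | α ≤ L t} := by
  set P := Q.withDensity fun t => ENNReal.ofReal (L t)
  have hrn : P.rnDeriv Q =ᵐ[Q] fun t => ENNReal.ofReal (L t) :=
    Measure.rnDeriv_withDensity Q hL.ennreal_ofReal
  have hLi : Integrable L Q := (Measure.integrable_toReal_rnDeriv (μ := P)).congr <|
    hrn.mono fun t ht => by simp [ht, ENNReal.toReal_ofReal (hL0 t)]
  have hS : MeasurableSet {t | α ≤ L t} := measurableSet_le measurable_const hL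
  have hmax : ∀ᵐ t ∂Q, max ((P.rnDeriv Q t).toReal - α) 0
      = {t | α ≤ L t}.indicator (fun t => L t - α) t := by
    filter_upwards [hrn] with t ht
    rw [ht, ENNReal.toReal_ofReal (hL0 t)]
    by_cases h : α ≤ L t
    · simp [h]
    · simp [h, (not_le.mp h).le]
  rw [hsDiv, integral_congr_ae hmax, integral_indicator hS,
    integral_sub hLi.restrict (integrable_const α), setIntegral_const,
    real_withDensity_ofReal hLi hL0 hS, smul_eq_mul, mul_comm]

lemma gaussianReal_eq_withDensity (C : ℝ) {v : ℝ≥0} (hv : v ≠ 0) :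
    gaussianReal 0 v = (gaussianReal C v).withDensity
      fun t => ENNReal.ofReal (exp ((C ^ 2 - 2 * C * t) / (2 * v))) := by
  rw [gaussianReal_of_var_ne_zero _ hv, gaussianReal_of_var_ne_zero _ hv,
    ← withDensity_mul _ (measurable_gaussianPDF _ _) (by fun_prop)]
  congr 1
  funext t
  rw [Pi.mul_apply, gaussianPDF, gaussianPDF, ← ENNReal.ofReal_mul (gaussianPDFReal_nonneg _ _ _)]
  congr 1
  rw [gaussianPDFReal, gaussianPDFReal, mul_assoc _ (exp _), ← exp_add]
  congr 2
  field_simp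
  ring

lemma setOf_le_exp_eq_Iic {C α : ℝ} (hC : 0 < C) (hα : 0 < α) {v : ℝ} (hv : 0 < v) :
    {t | α ≤ exp ((C ^ 2 - 2 * C * t) / (2 * v))} = Iic (C / 2 - v * log α / C) := by
  ext t
  have hT : C / 2 - v * log α / C = (C ^ 2 - 2 * v * log α) / (2 * C) := by
    field_simp
  rw [mem_ofPred_eq, mem_Iic, ← log_le_iff_le_exp hα, hT, le_div_iff₀ (by positivity),
    le_div_iff₀ (by positivity)]
  constructor <;> intro h <;> linarith

lemma cdf_gaussianReal (m : ℝ) {v : ℝ≥0} (hv : v ≠ 0) (x : ℝ) :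
    cdf (gaussianReal m v) x = cdf (gaussianReal 0 1) ((x - m) / √v) := by
  have hsv : 0 < √(v : ℝ) := by positivity
  have hmap : (gaussianReal m v).map (fun y => (y - m) / √v) = gaussianReal 0 1 := by
    rw [show (fun y => (y - m) / √v) = (· / √v) ∘ (· - m) from rfl,
      ← Measure.map_map (by fun_prop) (by fun_prop), gaussianReal_map_sub_const,
      gaussianReal_map_div_const]
    congr 1
    · simp
    · ext; simp [hv]
  rw [cdf_eq_real, cdf_eq_real, ← hmap, map_measureReal_apply (by fun_prop) measurableSet_Iic]
  congr 1
  ext y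
  simp [div_le_div_iff_of_pos_right hsv]

noncomputable def gaussianHockeyStick (α r : ℝ) : ℝ :=
  cdf (gaussianReal 0 1) (r / 2 - log α / r) - α * cdf (gaussianReal 0 1) (-(r / 2) - log α / r)

lemma hsDiv_gaussianReal {C α : ℝ} (hC : 0 < C) (hα : 0 < α) {v : ℝ≥0} (hv : v ≠ 0) :
    hsDiv α (gaussianReal 0 v) (gaussianReal C v) = gaussianHockeyStick α (C / √v) := by
  have hv' : (0 : ℝ) < v := by positivity
  have hP := gaussianReal_eq_withDensity C hv
  have : IsProbabilityMeasure ((gaussianReal C v).withDensity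
      fun t => ENNReal.ofReal (exp ((C ^ 2 - 2 * C * t) / (2 * v)))) := hP ▸ inferInstance
  rw [hP, hsDiv_withDensity (by fun_prop) (fun t => (exp_pos _).le), ← hP,
    setOf_le_exp_eq_Iic hC hα hv', ← cdf_eq_real, ← cdf_eq_real, cdf_gaussianReal 0 hv,
    cdf_gaussianReal C hv, gaussianHockeyStick]
  congr 3 <;> field_simp <;> rw [sq_sqrt hv'.le] <;> ring

lemma continuous_gaussianPDFReal (m : ℝ) (v : ℝ≥0) : Continuous (gaussianPDFReal m v) := by
  unfold gaussianPDFReal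
  fun_prop

lemma hasDerivAt_cdf_gaussianReal (m : ℝ) {v : ℝ≥0} (hv : v ≠ 0) (x : ℝ) :
    HasDerivAt (cdf (gaussianReal m v)) (gaussianPDFReal m v x) x := by
  have hint : Integrable (gaussianPDFReal m v) := integrable_gaussianPDFReal m v
  have hcdf : cdf (gaussianReal m v)
      = fun y => (∫ t in (0 : ℝ)..y, gaussianPDFReal m v t)
          + ∫ t in Iic 0, gaussianPDFReal m v t := by
    funext y
    rw [cdf_eq_real, measureReal_def, gaussianReal_apply_eq_integral m hv,
      ENNReal.toReal_ofReal (setIntegral_nonneg measurableSet_Iic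
        fun t _ => gaussianPDFReal_nonneg m v t),
      ← intervalIntegral.integral_Iic_sub_Iic hint.integrableOn hint.integrableOn, sub_add_cancel]
  have hcont := continuous_gaussianPDFReal m v
  rw [hcdf]
  exact (intervalIntegral.integral_hasDerivAt_right (hcont.intervalIntegrable 0 x)
    (hcont.stronglyMeasurableAtFilter _ _) hcont.continuousAt).add_const _

lemma mul_gaussianPDFReal_neg_half_sub {α : ℝ} (hα : 0 < α) {r : ℝ} (hr : r ≠ 0) :
    α * gaussianPDFReal 0 1 (-(r / 2) - log α / r) = gaussianPDFReal 0 1 (r / 2 - log α / r) := by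
  rw [gaussianPDFReal, gaussianPDFReal, mul_left_comm, ← exp_log hα, ← exp_add, log_exp]
  congr 2
  push_cast
  field_simp
  ring

lemma hasDerivAt_gaussianHockeyStick {α : ℝ} (hα : 0 < α) {r : ℝ} (hr : r ≠ 0) :
    HasDerivAt (gaussianHockeyStick α) (gaussianPDFReal 0 1 (r / 2 - log α / r)) r := by
  have hinv : HasDerivAt (fun r : ℝ => log α / r) (-(log α / r ^ 2)) r := by
    simpa [div_eq_mul_inv, neg_div] using (hasDerivAt_inv hr).const_mul (log α)
  have hhalf : HasDerivAt (fun r : ℝ => r / 2) (1 / 2) r := (hasDerivAt_id r).div_const 2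
  have ha := (hasDerivAt_cdf_gaussianReal 0 one_ne_zero _).comp r (hhalf.sub hinv)
  have hb := ((hasDerivAt_cdf_gaussianReal 0 one_ne_zero _).comp r
    (hhalf.neg.sub hinv)).const_mul α
  refine (ha.sub hb).congr_deriv ?_
  simp only [Pi.sub_apply, Pi.neg_apply]
  rw [← mul_assoc, mul_gaussianPDFReal_neg_half_sub hα hr]
  ring

lemma strictMonoOn_gaussianHockeyStick {α : ℝ} (hα : 0 < α) :
    StrictMonoOn (gaussianHockeyStick α) (Ioi 0) := by
  refine strictMonoOn_of_deriv_pos (convex_Ioi 0)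
    (fun r hr => (hasDerivAt_gaussianHockeyStick hα (ne_of_gt hr)).continuousAt.continuousWithinAt)
    fun r hr => ?_
  rw [interior_Ioi] at hr
  rw [(hasDerivAt_gaussianHockeyStick hα (ne_of_gt hr)).deriv]
  exact gaussianPDFReal_pos 0 1 _ one_ne_zero

lemma hsDiv_gaussianReal_lt_of_lt {C α : ℝ} (hC : 0 < C) (hα : 0 < α) {v w : ℝ≥0} (hv : v ≠ 0)
    (hvw : v < w) :
    hsDiv α (gaussianReal 0 w) (gaussianReal C w)
      < hsDiv α (gaussianReal 0 v) (gaussianReal C v) := by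
  have hv' : (0 : ℝ) < v := by positivity
  have hw' : (0 : ℝ) < w := hv'.trans hvw
  rw [hsDiv_gaussianReal hC hα hv, hsDiv_gaussianReal hC hα (ne_bot_of_gt hvw)]
  refine strictMonoOn_gaussianHockeyStick hα (mem_Ioi.mpr (by positivity))
    (mem_Ioi.mpr (by positivity)) ?_
  exact div_lt_div_of_pos_left hC (by positivity) (sqrt_lt_sqrt hv'.le hvw)

end GaussianMechanism

/-- If each of `N` independent mechanisms is a Gaussian mechanism
`Aᵢ(Dᵢ) = fᵢ(Dᵢ) + ξᵢ`, `ξᵢ ∼ N(0, σᵢ² I_d)`, and neighbouring global datasets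
differ only in one client `k`, with `‖f_k(D_k) − f_k(D'_k)‖₂ ≤ C`, then the
aggregate `Σᵢ Aᵢ(Dᵢ)` is `(ε,δ)`-DP whenever the single Gaussian mechanism with
sensitivity `C` and noise variance `Σᵢ σᵢ²` is `(ε,δ)`-DP. In particular, for
`N ≥ 2` and all `σᵢ > 0`, the aggregate is strictly better (at the level of the
dominating-pair hockey-stick curve, i.e. strictly smaller `δ` for the same `ε`)
than any individual client's local mechanism with noise variance `σ_k²`. -/
theorem stmt_18 {Xc : Type*} (d N : ℕ) (C ε δ : ℝ) (hC : 0 < C)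
    (σ : Fin N → ℝ) (hσ : ∀ i, 0 < σ i)
    (f : Fin N → Xc → EuclideanSpace ℝ (Fin d))
    (Neigh : (Fin N → Xc) → (Fin N → Xc) → Prop)
    (hNeigh : ∀ D D', Neigh D D' →
      ∃ k, (∀ i, i ≠ k → D i = D' i) ∧ ‖f k (D k) - f k (D' k)‖ ≤ C)
    (hGauss : ∀ μ ν : EuclideanSpace ℝ (Fin d), ‖μ - ν‖ ≤ C →
      ∀ E : Set (EuclideanSpace ℝ (Fin d)), MeasurableSet E →
        (((isoGauss d ⟨∑ i, (σ i) ^ 2, by positivity⟩).map (fun x => μ + x)) E).toReal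
          ≤ Real.exp ε *
              (((isoGauss d ⟨∑ i, (σ i) ^ 2, by positivity⟩).map (fun x => ν + x)) E).toReal
            + δ) :
    (∀ D D', Neigh D D' → ∀ E : Set (EuclideanSpace ℝ (Fin d)), MeasurableSet E →
      ((Measure.map (fun x : Fin N → EuclideanSpace ℝ (Fin d) => ∑ i, (f i (D i) + x i))
          (Measure.pi (fun i => isoGauss d ⟨(σ i) ^ 2, sq_nonneg _⟩))) E).toReal
        ≤ Real.exp ε *
            ((Measure.map (fun x : Fin N → EuclideanSpace ℝ (Fin d) => ∑ i, (f i (D' i) + x i))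
                (Measure.pi (fun i => isoGauss d ⟨(σ i) ^ 2, sq_nonneg _⟩))) E).toReal
          + δ)
    ∧ (2 ≤ N → ∀ k : Fin N,
        hsDiv (Real.exp ε)
            (gaussianReal 0 ⟨∑ i, (σ i) ^ 2, by positivity⟩)
            (gaussianReal C ⟨∑ i, (σ i) ^ 2, by positivity⟩)
          < hsDiv (Real.exp ε)
              (gaussianReal 0 ⟨(σ k) ^ 2, sq_nonneg _⟩)
              (gaussianReal C ⟨(σ k) ^ 2, sq_nonneg _⟩)) := by
  refine ⟨fun D D' hDD' E hE => ?_, fun hN k => ?_⟩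
  · obtain ⟨k, hk_eq, hk_le⟩ := hNeigh D D' hDD'
    have hvar : ∑ i, (⟨σ i ^ 2, sq_nonneg _⟩ : NNReal) = ⟨∑ i, σ i ^ 2, by positivity⟩ :=
      NNReal.eq (NNReal.coe_sum _ _)
    have hcentre : ∑ i, f i (D i) - ∑ i, f i (D' i) = f k (D k) - f k (D' k) := by
      rw [← Finset.sum_sub_distrib]
      exact Fintype.sum_eq_single k fun i hi => by rw [hk_eq i hi, sub_self]
    erw [isoGauss_map_sum_add_pi, isoGauss_map_sum_add_pi, hvar]
    exact hGauss _ _ (hcentre ▸ hk_le) E hE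
  · obtain ⟨j, hjk⟩ := Fintype.exists_ne_of_one_lt_card (by rwa [Fintype.card_fin]) k
    have hvar_lt : σ k ^ 2 < ∑ i, σ i ^ 2 :=
      Finset.single_lt_sum hjk (Finset.mem_univ k) (Finset.mem_univ j)
        (pow_pos (hσ j) 2) fun i _ _ => sq_nonneg _
    exact hsDiv_gaussianReal_lt_of_lt hC (Real.exp_pos ε)
      (ne_of_gt (pow_pos (hσ k) 2)) hvar_lt
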